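/- Let d ≥ 1 and let Ω be a bounded convex domain in ℝ^d with smooth boundary such that |Ω| = 1. For any p ∈ (0,1) and any u ∈ H¹(Ω) such that ∂ₙu = 0 on ∂Ω, one has ‖∇u‖_{L²(Ω)}² ≥ λ₂·[‖u‖_{L²(Ω)}² − ‖u‖_{L^{p+1}(Ω)}²]. -/

import Mathlib

open MeasureTheory Real Filter Set
open scoped RealInnerProductSpace Topology NNReal ENNReal

noncomputable section

/-- `d`-dimensional Euclidean space. -/
abbrev Euc (d : ℕ) := EuclideanSpace ℝ (Fin d)

variable {d : ℕ}

/-- First-order partial derivative `∂ᵢ u (x)`. -/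
def pd1 (u : Euc d → ℝ) (i : Fin d) (x : Euc d) : ℝ :=
  fderiv ℝ u x (EuclideanSpace.single i 1)

/-- Second-order partial derivative `∂²ᵢⱼ u (x)`. -/
def pd2 (u : Euc d → ℝ) (i j : Fin d) (x : Euc d) : ℝ :=
  fderiv ℝ (fun y => fderiv ℝ u y (EuclideanSpace.single j 1)) x
    (EuclideanSpace.single i 1)

/-- Laplacian `Δu (x)`. -/
def lapl (u : Euc d → ℝ) (x : Euc d) : ℝ := ∑ i : Fin d, pd2 u i i x

/-- Squared Frobenius norm `|Hess u (x)|²` of the Hessian. -/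
def hessSq (u : Euc d → ℝ) (x : Euc d) : ℝ :=
  ∑ i : Fin d, ∑ j : Fin d, (pd2 u i j x) ^ 2

/-- `Ω` is a bounded domain with smooth boundary (given by a smooth defining function). -/
def SmoothBoundedDomain (Ω : Set (Euc d)) : Prop :=
  IsOpen Ω ∧ Bornology.IsBounded Ω ∧ IsConnected Ω ∧
  ∃ Φ : Euc d → ℝ, ContDiff ℝ (⊤ : ℕ∞) Φ ∧ Ω = {x | Φ x < 0} ∧
    frontier Ω = {x | Φ x = 0} ∧ ∀ x ∈ frontier Ω, gradient Φ x ≠ 0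

/-- `nv` is the unit outward normal vector field on `∂Ω`. -/
def OuterNormal (Ω : Set (Euc d)) (nv : Euc d → Euc d) : Prop :=
  ∃ Φ : Euc d → ℝ, ContDiff ℝ (⊤ : ℕ∞) Φ ∧ Ω = {x | Φ x < 0} ∧
    frontier Ω = {x | Φ x = 0} ∧
    ∀ x ∈ frontier Ω, gradient Φ x ≠ 0 ∧ nv x = ‖gradient Φ x‖⁻¹ • gradient Φ x

/-- Homogeneous Neumann boundary condition `∂ₙ u = 0` on `∂Ω`. -/
def NeumannBC (Ω : Set (Euc d)) (nv : Euc d → Euc d) (u : Euc d → ℝ) : Prop :=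
  ∀ x ∈ frontier Ω, (inner ℝ (gradient u x) (nv x) : ℝ) = 0

/-- Membership in `H¹(Ω)`. -/
def MemH1 (Ω : Set (Euc d)) (u : Euc d → ℝ) : Prop :=
  ContDiffOn ℝ 1 u (closure Ω) ∧
  IntegrableOn (fun x => (u x) ^ 2) Ω volume ∧
  IntegrableOn (fun x => ‖gradient u x‖ ^ 2) Ω volume

/-- Membership in `H²(Ω)`. -/
def MemH2 (Ω : Set (Euc d)) (u : Euc d → ℝ) : Prop :=
  ContDiffOn ℝ 2 u (closure Ω) ∧
  IntegrableOn (fun x => (u x) ^ 2) Ω volume ∧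
  IntegrableOn (fun x => ‖gradient u x‖ ^ 2) Ω volume ∧
  IntegrableOn (fun x => hessSq u x) Ω volume ∧
  IntegrableOn (fun x => (lapl u x) ^ 2) Ω volume

/-- `‖∇u‖_{L²(Ω)}²`. -/
def grad2 (Ω : Set (Euc d)) (u : Euc d → ℝ) : ℝ := ∫ x in Ω, ‖gradient u x‖ ^ 2

/-- `‖u‖_{L^q(Ω)}²`. -/
def nsq (Ω : Set (Euc d)) (u : Euc d → ℝ) (q : ℝ) : ℝ :=
  (∫ x in Ω, |u x| ^ q) ^ (2 / q)

/-- `‖u‖_{L^q(Ω)}`. -/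
def normLq (Ω : Set (Euc d)) (u : Euc d → ℝ) (q : ℝ) : ℝ :=
  (∫ x in Ω, |u x| ^ q) ^ (1 / q)

/-- Entropy `∫_Ω u² log (u²/‖u‖₂²)`. -/
def ent (Ω : Set (Euc d)) (u : Euc d → ℝ) : ℝ :=
  ∫ x in Ω, (u x) ^ 2 * Real.log ((u x) ^ 2 / nsq Ω u 2)

/-- The second (i.e. lowest positive) Neumann eigenvalue of `-Δ` on `Ω`, via its
variational characterization as the optimal Poincaré constant. -/
def lam2 (Ω : Set (Euc d)) : ℝ :=
  sInf { r : ℝ | ∃ u : Euc d → ℝ, MemH1 Ω u ∧ (∫ x in Ω, u x) = 0 ∧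
    (∫ x in Ω, (u x) ^ 2) ≠ 0 ∧ r = grad2 Ω u / ∫ x in Ω, (u x) ^ 2 }

/-- Best constant `Λ★` in the interpolation inequality
`‖∇u‖₂² ≥ Λ★/(p-1) [‖u‖_{p+1}² - ‖u‖₂²]`. -/
def LamStar (Ω : Set (Euc d)) (p : ℝ) : ℝ :=
  sSup { L : ℝ | ∀ u : Euc d → ℝ, MemH1 Ω u →
    grad2 Ω u ≥ L / (p - 1) * (nsq Ω u (p + 1) - nsq Ω u 2) }

/-- Optimal constant in the logarithmic Sobolev inequality on `Ω`. -/
def LamStarLS (Ω : Set (Euc d)) : ℝ :=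
  sSup { L : ℝ | ∀ u : Euc d → ℝ, MemH1 Ω u → grad2 Ω u ≥ L / 2 * ent Ω u }

/-- `ε(p) = (p-1)/|p-1|`. -/
def eps (p : ℝ) : ℝ := (p - 1) / |p - 1|

/-- `u` is a positive solution of `-ε(p) Δu + λ u - u^p = 0` in `Ω`
with homogeneous Neumann boundary conditions. -/
def IsPositiveSolution (Ω : Set (Euc d)) (nv : Euc d → Euc d) (p lam : ℝ)
    (u : Euc d → ℝ) : Prop :=
  ContDiffOn ℝ 2 u (closure Ω) ∧ (∀ x ∈ Ω, 0 < u x) ∧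
  (∀ x ∈ Ω, - eps p * lapl u x + lam * u x - u x ^ p = 0) ∧
  NeumannBC Ω nv u

/-- `μ₁`, the infimum of the parameters `λ > 0` for which a non-constant positive
solution exists. -/
def mu1 (Ω : Set (Euc d)) (nv : Euc d → Euc d) (p : ℝ) : ℝ :=
  sInf { lam : ℝ | 0 < lam ∧ ∃ u : Euc d → ℝ,
    IsPositiveSolution Ω nv p lam u ∧ ¬ ∃ c : ℝ, ∀ x ∈ Ω, u x = c }

/-- The inequality of problem (P2): `‖∇u‖₂² ≥ ε(p) [m ‖u‖_{p+1}² - l ‖u‖₂²]` for all `u ∈ H¹(Ω)`. -/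
def IneqP2 (Ω : Set (Euc d)) (p m l : ℝ) : Prop :=
  ∀ u : Euc d → ℝ, MemH1 Ω u →
    grad2 Ω u ≥ eps p * (m * nsq Ω u (p + 1) - l * nsq Ω u 2)

/-- `μ ↦ λ(μ)`, the best constant in problem (P2): smallest admissible `l` if
`ε(p) > 0`, largest if `ε(p) < 0`. -/
def lambdaBest (Ω : Set (Euc d)) (p m : ℝ) : ℝ :=
  if 1 < p then sInf { l : ℝ | IneqP2 Ω p m l } else sSup { l : ℝ | IneqP2 Ω p m l }

/-- `λ ↦ μ(λ)`, the inverse function of `μ ↦ λ(μ)`: the best `m` in (P2). -/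
def muBest (Ω : Set (Euc d)) (p l : ℝ) : ℝ :=
  if 1 < p then sSup { m : ℝ | IneqP2 Ω p m l } else sInf { m : ℝ | IneqP2 Ω p m l }

/-- `μ₂ = inf{λ > 0 : μ(λ) ≠ λ}`. -/
def mu2 (Ω : Set (Euc d)) (p : ℝ) : ℝ :=
  sInf { l : ℝ | 0 < l ∧ muBest Ω p l ≠ l }

/-- Lowest Neumann eigenvalue `λ₁(Ω, V)` of the Schrödinger operator `-Δ + V`,
via its variational characterization. -/
def schroLam1 (Ω : Set (Euc d)) (V : Euc d → ℝ) : ℝ :=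
  sInf { r : ℝ | ∃ u : Euc d → ℝ, MemH1 Ω u ∧ (∫ x in Ω, (u x) ^ 2) ≠ 0 ∧
    r = (grad2 Ω u + ∫ x in Ω, V x * (u x) ^ 2) / ∫ x in Ω, (u x) ^ 2 }

/-- Optimal Keller–Lieb–Thirring constant
`ν(μ) = -ε(p) inf{λ₁(Ω, -ε(p)φ) : φ ∈ L^q₊(Ω), ‖φ^{ε(p)}‖_q = μ}` with `q = (p+1)/|p-1|`. -/
def nuKLT (Ω : Set (Euc d)) (p m : ℝ) : ℝ :=
  - eps p * sInf { r : ℝ | ∃ φ : Euc d → ℝ, (∀ x ∈ Ω, 0 ≤ φ x) ∧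
    IntegrableOn (fun x => |φ x ^ eps p| ^ ((p + 1) / |p - 1|)) Ω volume ∧
    normLq Ω (fun x => φ x ^ eps p) ((p + 1) / |p - 1|) = m ∧
    r = schroLam1 Ω (fun x => - eps p * φ x) }

/-- `μ₃ = inf{μ > 0 : ν(μ) ≠ μ}`. -/
def mu3 (Ω : Set (Euc d)) (p : ℝ) : ℝ :=
  sInf { m : ℝ | 0 < m ∧ nuKLT Ω p m ≠ m }

/-- `θ★(p,d) = (d-1)² p / (d(d+2)+p)`. -/
def thetaStar (p : ℝ) (d : ℕ) : ℝ :=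
  ((d : ℝ) - 1) ^ 2 * p / ((d : ℝ) * ((d : ℝ) + 2) + p)

/-- `p ∈ (0,1) ∪ (1, 2^* - 1)` where `2^* = 2d/(d-2)` if `d ≥ 3` and `2^* = ∞` if `d ≤ 2`. -/
def pAdmissible (d : ℕ) (p : ℝ) : Prop :=
  (0 < p ∧ p < 1) ∨ (1 < p ∧ (3 ≤ d → p < ((d : ℝ) + 2) / ((d : ℝ) - 2)))

/-- The functional `J_Λ`. -/
def JLam (Ω : Set (Euc d)) (p L : ℝ) (u : Euc d → ℝ) : ℝ :=
  if p = 1 then grad2 Ω u - L / 2 * ent Ω u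
  else grad2 Ω u - L / (p - 1) * (nsq Ω u (p + 1) - nsq Ω u 2)

/-!
Write `c` for the mean of `u` over `Ω`, which is a probability space. Applying the
variational definition of `λ₂` to the mean-zero function `u - c` gives
`‖∇u‖₂² ≥ λ₂ ‖u - c‖₂² = λ₂ (‖u‖₂² - c²)`,
and Jensen's inequality for `t ↦ t^(p+1)` gives `c² ≤ ‖u‖_{p+1}²`.
-/

open MeasureTheory ProbabilityTheory

section Probability

variable {α : Type*} [MeasurableSpace α] {μ : Measure α} {f : α → ℝ}

lemma MeasureTheory.MemLp.integrable_abs_rpow_of_le_two [IsFiniteMeasure μ] (hf : MemLp f 2 μ)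
    {q : ℝ} (hq0 : 0 ≤ q) (hq2 : q ≤ 2) : Integrable (fun x => |f x| ^ q) μ := by
  have hLq : MemLp f (ENNReal.ofReal q) μ :=
    hf.mono_exponent (by simpa using ENNReal.ofReal_le_ofReal hq2)
  simpa [ENNReal.toReal_ofReal hq0] using hLq.integrable_norm_rpow'

variable [IsProbabilityMeasure μ]

lemma sq_integral_le_integral_abs_rpow_rpow {q : ℝ} (hq : 1 ≤ q) (hf : Integrable f μ)
    (hfq : Integrable (fun x => |f x| ^ q) μ) :
    (∫ x, f x ∂μ) ^ 2 ≤ (∫ x, |f x| ^ q ∂μ) ^ (2 / q) := by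
  have hq0 : 0 < q := by linarith
  have hjensen : (∫ x, |f x| ∂μ) ^ q ≤ ∫ x, |f x| ^ q ∂μ :=
    (convexOn_rpow hq).map_integral_le (continuous_rpow_const hq0.le).continuousOn isClosed_Ici
      (.of_forall fun x => abs_nonneg (f x)) hf.abs hfq
  have hL1 : |∫ x, f x ∂μ| ≤ (∫ x, |f x| ^ q ∂μ) ^ q⁻¹ :=
    (abs_integral_le_integral_abs).trans <|
      (Real.le_rpow_inv_iff_of_pos (integral_nonneg fun x => abs_nonneg (f x))
        (integral_nonneg fun x => by positivity) hq0).2 hjensen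
  calc (∫ x, f x ∂μ) ^ 2 = |∫ x, f x ∂μ| ^ 2 := (sq_abs _).symm
    _ ≤ ((∫ x, |f x| ^ q ∂μ) ^ q⁻¹) ^ 2 := pow_le_pow_left₀ (abs_nonneg _) hL1 2
    _ = (∫ x, |f x| ^ q ∂μ) ^ (2 / q) := by
      rw [← Real.rpow_mul_natCast (integral_nonneg fun x => by positivity)]
      ring_nf

lemma integral_sub_integral_sq (hf : MemLp f 2 μ) :
    ∫ x, (f x - ∫ y, f y ∂μ) ^ 2 ∂μ = ∫ x, f x ^ 2 ∂μ - (∫ x, f x ∂μ) ^ 2 := by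
  rw [← variance_eq_integral hf.aemeasurable, variance_eq_sub hf]
  rfl

end Probability

section Poincare

variable {Ω : Set (Euc d)} {u : Euc d → ℝ}

lemma MemH1.aestronglyMeasurable (hu : MemH1 Ω u) :
    AEStronglyMeasurable u (volume.restrict Ω) :=
  (hu.1.continuousOn.aestronglyMeasurable isClosed_closure.measurableSet).mono_measure
    (Measure.restrict_mono subset_closure le_rfl)

lemma MemH1.memLp_two (hu : MemH1 Ω u) : MemLp u 2 (volume.restrict Ω) :=
  (memLp_two_iff_integrable_sq hu.aestronglyMeasurable).2 hu.2.1

lemma gradient_sub_const (c : ℝ) : gradient (fun x => u x - c) = gradient u := by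
  funext x
  simp [gradient, fderiv_sub_const]

lemma MemH1.sub_const [IsFiniteMeasure (volume.restrict Ω)] (hu : MemH1 Ω u) (c : ℝ) :
    MemH1 Ω (fun x => u x - c) :=
  ⟨hu.1.sub contDiffOn_const, (hu.memLp_two.sub (memLp_const c)).integrable_sq,
    by simpa [gradient_sub_const] using hu.2.2⟩

lemma grad2_sub_const (c : ℝ) : grad2 Ω (fun x => u x - c) = grad2 Ω u := by
  simp only [grad2, gradient_sub_const]

lemma nsq_two : nsq Ω u 2 = ∫ x in Ω, u x ^ 2 := by
  rw [nsq, div_self two_ne_zero, Real.rpow_one]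
  simp_rw [Real.rpow_two, sq_abs]

lemma grad2_nonneg : 0 ≤ grad2 Ω u := integral_nonneg fun x => by positivity

lemma grad2_div_integral_sq_nonneg : 0 ≤ grad2 Ω u / ∫ x in Ω, u x ^ 2 :=
  div_nonneg grad2_nonneg (integral_nonneg fun x => sq_nonneg (u x))

lemma lam2_nonneg (Ω : Set (Euc d)) : 0 ≤ lam2 Ω := by
  refine Real.sInf_nonneg ?_
  rintro r ⟨w, -, -, -, rfl⟩
  exact grad2_div_integral_sq_nonneg

lemma lam2_mul_integral_sq_le_grad2 (hu : MemH1 Ω u) (hmean : ∫ x in Ω, u x = 0) :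
    lam2 Ω * ∫ x in Ω, u x ^ 2 ≤ grad2 Ω u := by
  rcases (integral_nonneg fun x => sq_nonneg (u x) :
    0 ≤ ∫ x in Ω, u x ^ 2).eq_or_lt with hzero | hpos
  · rw [← hzero, mul_zero]
    exact grad2_nonneg
  have hbdd : BddBelow {r : ℝ | ∃ w : Euc d → ℝ, MemH1 Ω w ∧ (∫ x in Ω, w x) = 0 ∧
      (∫ x in Ω, (w x) ^ 2) ≠ 0 ∧ r = grad2 Ω w / ∫ x in Ω, (w x) ^ 2} := by
    refine ⟨0, ?_⟩
    rintro r ⟨w, -, -, -, rfl⟩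
    exact grad2_div_integral_sq_nonneg
  rw [← le_div_iff₀ hpos]
  exact csInf_le hbdd ⟨u, hu, hmean, hpos.ne', rfl⟩

end Poincare

theorem statement_11_general {d : ℕ} (p : ℝ) (hp : 0 < p ∧ p < 1)
    (Ω : Set (Euc d))
    (hvol : volume Ω = 1)
    (u : Euc d → ℝ) (hu : MemH1 Ω u) :
    grad2 Ω u ≥ lam2 Ω * (nsq Ω u 2 - nsq Ω u (p + 1)) := by
  have : IsProbabilityMeasure (volume.restrict Ω) := ⟨by rwa [Measure.restrict_apply_univ]⟩
  set c := ∫ x in Ω, u x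
  have hmean : ∫ x in Ω, (u x - c) = 0 := by
    simpa [average_eq_integral] using integral_sub_average (volume.restrict Ω) u
  have hpoincare : lam2 Ω * (nsq Ω u 2 - c ^ 2) ≤ grad2 Ω u := by
    have := lam2_mul_integral_sq_le_grad2 (hu.sub_const c) hmean
    rwa [grad2_sub_const, integral_sub_integral_sq hu.memLp_two, ← nsq_two] at this
  have hjensen : c ^ 2 ≤ nsq Ω u (p + 1) :=
    sq_integral_le_integral_abs_rpow_rpow (by linarith) (hu.memLp_two.integrable one_le_two)
      (hu.memLp_two.integrable_abs_rpow_of_le_two (by linarith) (by linarith))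
  nlinarith [lam2_nonneg Ω]

/-- Lemma 9 (Bakry–Emery estimate): for `p ∈ (0,1)` and any `u ∈ H¹(Ω)` with
`∂ₙu = 0` on `∂Ω`, `‖∇u‖₂² ≥ λ₂ [‖u‖₂² - ‖u‖_{p+1}²]`. -/
theorem statement_11 {d : ℕ} (hd : 1 ≤ d) (p : ℝ) (hp : 0 < p ∧ p < 1)
    (Ω : Set (Euc d)) (nv : Euc d → Euc d)
    (hΩ : SmoothBoundedDomain Ω) (hconv : Convex ℝ Ω) (hnv : OuterNormal Ω nv)
    (hvol : volume Ω = 1)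
    (u : Euc d → ℝ) (hu : MemH1 Ω u) (hbc : NeumannBC Ω nv u) :
    grad2 Ω u ≥ lam2 Ω * (nsq Ω u 2 - nsq Ω u (p + 1)) :=
  statement_11_general p hp Ω hvol u hu
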